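/- arXiv:2604.27268 — 2 statements merged into one kernel-verified Lean document; each statement's English description precedes it below -/
import Mathlib

section
/- For every finite prechart (Q, β), the map Φ_β is cocontinuous: for every decreasing ω-chain d₀ ⊒ d₁ ⊒ d₂ ⊒ … in D_Q, Φ_β(inf_{i∈ℕ} d_i) = inf_{i∈ℕ} Φ_β(d_i), where the infima of ω-cochains in D_Q are computed pointwise. -/
open Classical in
/-- The lifting `d↑` of a distance function on `X` to `Σ × X + V`. -/
noncomputable def distLift {A V X : Type*} (d : X → X → ℝ) :
    ((A × X) ⊕ V) → ((A × X) ⊕ V) → ℝ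
  | Sum.inl (a, x), Sum.inl (b, y) => if a = b then (1 / 2) * d x y else 1
  | Sum.inr v, Sum.inr w => if v = w then 0 else 1
  | _, _ => 1

/-- Supremum of `f` over a finite set, with the convention `sup ∅ = 0`. -/
noncomputable def hSup {Y : Type*} (s : Finset Y) (f : Y → ℝ) : ℝ :=
  if h : s.Nonempty then s.sup' h f else 0

/-- Infimum of `f` over a finite set, with the convention `inf ∅ = 1`. -/
noncomputable def hInf {Y : Type*} (s : Finset Y) (f : Y → ℝ) : ℝ :=
  if h : s.Nonempty then s.inf' h f else 1

/-- Hausdorff lifting of a distance function to finite subsets. -/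
noncomputable def hausdorffDist {X : Type*} (d : X → X → ℝ) (s t : Finset X) : ℝ :=
  max (hSup s fun x => hInf t fun y => d x y) (hSup t fun y => hInf s fun x => d y x)

/-- The map `Φ_β` associated with a prechart `(Q, β)`. -/
noncomputable def Phi {A V Q : Type*} (β : Q → Finset ((A × Q) ⊕ V))
    (d : Q → Q → ℝ) : Q → Q → ℝ :=
  fun q₁ q₂ => hausdorffDist (distLift d) (β q₁) (β q₂)

/-- `d` is a 1-bounded pseudometric on `X`. -/
structure IsBPMet {X : Type*} (d : X → X → ℝ) : Prop where
  nonneg : ∀ x y, 0 ≤ d x y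
  le_one : ∀ x y, d x y ≤ 1
  refl : ∀ x, d x x = 0
  symm : ∀ x y, d x y = d y x
  triangle : ∀ x y z, d x z ≤ d x y + d y z

/-- A bisimulation between two precharts. -/
def IsBisim {A V Q₁ Q₂ : Type*} (β₁ : Q₁ → Finset ((A × Q₁) ⊕ V))
    (β₂ : Q₂ → Finset ((A × Q₂) ⊕ V)) (R : Q₁ → Q₂ → Prop) : Prop :=
  ∀ q₁ q₂, R q₁ q₂ →
    (∀ v : V, Sum.inr v ∈ β₁ q₁ ↔ Sum.inr v ∈ β₂ q₂) ∧
    (∀ (a : A) (q₁' : Q₁), Sum.inl (a, q₁') ∈ β₁ q₁ →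
      ∃ q₂', Sum.inl (a, q₂') ∈ β₂ q₂ ∧ R q₁' q₂') ∧
    (∀ (a : A) (q₂' : Q₂), Sum.inl (a, q₂') ∈ β₂ q₂ →
      ∃ q₁', Sum.inl (a, q₁') ∈ β₁ q₁ ∧ R q₁' q₂')

/-- Bisimilarity of two states of a prechart. -/
def Bisimilar {A V Q : Type*} (β : Q → Finset ((A × Q) ⊕ V)) (q₁ q₂ : Q) : Prop :=
  ∃ R, IsBisim β β R ∧ R q₁ q₂

/-- A prechart homomorphism: a function whose graph is a bisimulation. -/
def IsHom {A V Q₁ Q₂ : Type*} (β₁ : Q₁ → Finset ((A × Q₁) ⊕ V))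
    (β₂ : Q₂ → Finset ((A × Q₂) ⊕ V)) (f : Q₁ → Q₂) : Prop :=
  IsBisim β₁ β₂ fun q₁ q₂ => q₂ = f q₁

/-- Stratification of bisimilarity between two precharts. -/
def Strat2 {A V Q₁ Q₂ : Type*} (β₁ : Q₁ → Finset ((A × Q₁) ⊕ V))
    (β₂ : Q₂ → Finset ((A × Q₂) ⊕ V)) : ℕ → Q₁ → Q₂ → Prop
  | 0 => fun _ _ => True
  | n + 1 => fun q₁ q₂ =>
      (∀ v : V, Sum.inr v ∈ β₁ q₁ ↔ Sum.inr v ∈ β₂ q₂) ∧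
      (∀ (a : A) (q₁' : Q₁), Sum.inl (a, q₁') ∈ β₁ q₁ →
        ∃ q₂', Sum.inl (a, q₂') ∈ β₂ q₂ ∧ Strat2 β₁ β₂ n q₁' q₂') ∧
      (∀ (a : A) (q₂' : Q₂), Sum.inl (a, q₂') ∈ β₂ q₂ →
        ∃ q₁', Sum.inl (a, q₁') ∈ β₁ q₁ ∧ Strat2 β₁ β₂ n q₁' q₂')

/-- Stratification of bisimilarity on a single prechart. -/
def Strat {A V Q : Type*} (β : Q → Finset ((A × Q) ⊕ V)) : ℕ → Q → Q → Prop :=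
  Strat2 β β

/-- One-step transition relation of a prechart. -/
def StepRel {A V Q : Type*} (β : Q → Finset ((A × Q) ⊕ V)) (q q' : Q) : Prop :=
  ∃ a : A, Sum.inl (a, q') ∈ β q

/-- A prechart is locally finite if every state reaches only finitely many states. -/
def LocFinite {A V Q : Type*} (β : Q → Finset ((A × Q) ⊕ V)) : Prop :=
  ∀ q : Q, {q' | Relation.ReflTransGen (StepRel β) q q'}.Finite

/-- `bd` is the least fixpoint of `Φ_β` in the lattice of 1-bounded pseudometrics. -/
def IsLfpDist {A V Q : Type*} (β : Q → Finset ((A × Q) ⊕ V)) (bd : Q → Q → ℝ) : Prop :=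
  IsBPMet bd ∧ Phi β bd = bd ∧
    ∀ d : Q → Q → ℝ, IsBPMet d → Phi β d = d → ∀ x y, bd x y ≤ d x y

open Classical in
/-- The discrete pseudometric, the top element of `D_X`. -/
noncomputable def discreteDist {X : Type*} : X → X → ℝ :=
  fun x y => if x = y then 0 else 1

/-- Iterates `Φ_β^{(p)}` of `Φ_β` starting from the discrete pseudometric. -/
noncomputable def PhiIter {A V Q : Type*} (β : Q → Finset ((A × Q) ⊕ V)) :
    ℕ → Q → Q → ℝ
  | 0 => discreteDist
  | n + 1 => Phi β (PhiIter β n)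


section Aux

open Filter Topology

lemma hSup_tendsto' {Y α : Type*} {s : Finset Y} {f : α → Y → ℝ} {F : Filter α} {g : Y → ℝ}
    (h : ∀ y ∈ s, Tendsto (fun i => f i y) F (𝓝 (g y))) :
    Tendsto (fun i => hSup s (f i)) F (𝓝 (hSup s g)) := by
  unfold hSup
  split_ifs with hs
  · exact Filter.Tendsto.finset_sup'_nhds_apply hs h
  · exact tendsto_const_nhds

lemma hInf_tendsto' {Y α : Type*} {s : Finset Y} {f : α → Y → ℝ} {F : Filter α} {g : Y → ℝ}
    (h : ∀ y ∈ s, Tendsto (fun i => f i y) F (𝓝 (g y))) :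
    Tendsto (fun i => hInf s (f i)) F (𝓝 (hInf s g)) := by
  unfold hInf
  split_ifs with hs
  · exact Filter.Tendsto.finset_inf'_nhds_apply hs h
  · exact tendsto_const_nhds

lemma distLift_tendsto' {A V X α : Type*} {d : α → X → X → ℝ} {F : Filter α} {l : X → X → ℝ}
    (h : ∀ x y, Tendsto (fun i => d i x y) F (𝓝 (l x y))) (m n : (A × X) ⊕ V) :
    Tendsto (fun i => distLift (d i) m n) F (𝓝 (distLift l m n)) := by
  match m, n with
  | Sum.inl (a, x), Sum.inl (b, y) =>
    simp only [distLift]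
    split_ifs
    · exact (h x y).const_mul _
    · exact tendsto_const_nhds
  | Sum.inr v, Sum.inr w => simp only [distLift]; exact tendsto_const_nhds
  | Sum.inl _, Sum.inr _ => simp only [distLift]; exact tendsto_const_nhds
  | Sum.inr _, Sum.inl _ => simp only [distLift]; exact tendsto_const_nhds

lemma hSup_mono' {Y : Type*} {s : Finset Y} {f g : Y → ℝ} (h : ∀ y ∈ s, f y ≤ g y) :
    hSup s f ≤ hSup s g := by
  unfold hSup
  split_ifs with hs
  · exact Finset.sup'_mono_fun h
  · exact le_rfl

lemma hInf_mono' {Y : Type*} {s : Finset Y} {f g : Y → ℝ} (h : ∀ y ∈ s, f y ≤ g y) :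
    hInf s f ≤ hInf s g := by
  unfold hInf
  split_ifs with hs
  · exact Finset.le_inf' hs _ fun y hy => le_trans (Finset.inf'_le _ hy) (h y hy)
  · exact le_rfl

lemma distLift_mono' {A V X : Type*} {d d' : X → X → ℝ} (h : ∀ x y, d x y ≤ d' x y)
    (m n : (A × X) ⊕ V) : distLift d m n ≤ distLift d' m n := by
  match m, n with
  | Sum.inl (a, x), Sum.inl (b, y) =>
    simp only [distLift]
    split_ifs
    · have := h x y; linarith
    · exact le_rfl
  | Sum.inr v, Sum.inr w => exact le_rfl
  | Sum.inl _, Sum.inr _ => exact le_rfl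
  | Sum.inr _, Sum.inl _ => exact le_rfl

lemma Phi_mono' {A V Q : Type*} (β : Q → Finset ((A × Q) ⊕ V)) {d d' : Q → Q → ℝ}
    (h : ∀ x y, d x y ≤ d' x y) (x y : Q) : Phi β d x y ≤ Phi β d' x y := by
  unfold Phi hausdorffDist
  apply max_le_max
  · exact hSup_mono' fun m _ => hInf_mono' fun n _ => distLift_mono' h m n
  · exact hSup_mono' fun m _ => hInf_mono' fun n _ => distLift_mono' h m n

lemma hSup_nonneg' {Y : Type*} {s : Finset Y} {f : Y → ℝ} (h : ∀ y ∈ s, 0 ≤ f y) :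
    0 ≤ hSup s f := by
  unfold hSup
  split_ifs with hs
  · obtain ⟨y, hy⟩ := hs
    exact le_trans (h y hy) (Finset.le_sup' f hy)
  · exact le_rfl

lemma hInf_nonneg' {Y : Type*} {s : Finset Y} {f : Y → ℝ} (h : ∀ y ∈ s, 0 ≤ f y) :
    0 ≤ hInf s f := by
  unfold hInf
  split_ifs with hs
  · exact Finset.le_inf' hs f h
  · norm_num

lemma distLift_nonneg' {A V X : Type*} {d : X → X → ℝ} (h : ∀ x y, 0 ≤ d x y)
    (m n : (A × X) ⊕ V) : 0 ≤ distLift d m n := by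
  match m, n with
  | Sum.inl (a, x), Sum.inl (b, y) =>
    simp only [distLift]; split_ifs
    · have := h x y; linarith
    · norm_num
  | Sum.inr v, Sum.inr w => simp only [distLift]; split_ifs <;> norm_num
  | Sum.inl _, Sum.inr _ => simp only [distLift]; norm_num
  | Sum.inr _, Sum.inl _ => simp only [distLift]; norm_num

lemma Phi_nonneg' {A V Q : Type*} (β : Q → Finset ((A × Q) ⊕ V)) {d : Q → Q → ℝ}
    (h : ∀ x y, 0 ≤ d x y) (x y : Q) : 0 ≤ Phi β d x y :=
  le_trans (hSup_nonneg' fun m _ => hInf_nonneg' fun n _ => distLift_nonneg' h m n)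
    (le_max_left _ _)

end Aux

/-- For every finite prechart `(Q, β)`, `Φ_β` is cocontinuous: it preserves
pointwise infima of decreasing ω-chains of 1-bounded pseudometrics. -/
theorem Phi_cocontinuous {A V Q : Type*} [Finite Q] (β : Q → Finset ((A × Q) ⊕ V))
    (d : ℕ → Q → Q → ℝ) (hmet : ∀ i, IsBPMet (d i))
    (hchain : ∀ (i : ℕ) (x y : Q), d (i + 1) x y ≤ d i x y) :
    Phi β (fun x y => ⨅ i : ℕ, d i x y) = fun x y => ⨅ i : ℕ, Phi β (d i) x y := by
  
  classical
  have hA : ∀ x y, Antitone fun i => d i x y := fun x y =>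
    antitone_nat_of_succ_le fun i => hchain i x y
  set l : Q → Q → ℝ := fun x y => ⨅ i : ℕ, d i x y with hl
  have hdl : ∀ x y, Filter.Tendsto (fun i => d i x y) Filter.atTop (nhds (l x y)) := by
    intro x y
    exact tendsto_atTop_ciInf (hA x y) ⟨0, by rintro r ⟨i, rfl⟩; exact (hmet i).nonneg x y⟩
  funext x y
  have h1 : Filter.Tendsto (fun i => Phi β (d i) x y) Filter.atTop (nhds (Phi β l x y)) := by
    unfold Phi hausdorffDist
    apply Filter.Tendsto.max
    · exact hSup_tendsto' fun m _ => hInf_tendsto' fun n _ => distLift_tendsto' hdl m n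
    · exact hSup_tendsto' fun m _ => hInf_tendsto' fun n _ => distLift_tendsto' hdl m n
  have hAnt : Antitone fun i => Phi β (d i) x y := by
    intro i j hij
    exact Phi_mono' β (fun a b => hA a b hij) x y
  have h2 : Filter.Tendsto (fun i => Phi β (d i) x y) Filter.atTop
      (nhds (⨅ i : ℕ, Phi β (d i) x y)) :=
    tendsto_atTop_ciInf hAnt ⟨0, by
      rintro r ⟨i, rfl⟩
      exact Phi_nonneg' β (fun a b => (hmet i).nonneg a b) x y⟩
  exact tendsto_nhds_unique h1 h2
end

section
/- Let (X, β) be any prechart. For all x, y ∈ X and all k ∈ ℕ: x ~^(k) y if and only if bd_β(x, y) ≤ 2^{-k}. -/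
section Aux

variable {A V X Y : Type*}

lemma distLift_inl_inl_eq (d : X → X → ℝ) (a : A) (x y : X) :
    distLift (V := V) d (Sum.inl (a, x)) (Sum.inl (a, y)) = (1 / 2) * d x y := by
  simp [distLift]

lemma distLift_inl_inl_ne (d : X → X → ℝ) {a b : A} (hab : a ≠ b) (x y : X) :
    distLift (V := V) d (Sum.inl (a, x)) (Sum.inl (b, y)) = 1 := by
  simp [distLift, hab]

lemma distLift_inr_inr_eq (d : X → X → ℝ) (v : V) :
    distLift (A := A) d (Sum.inr v) (Sum.inr v) = 0 := by
  simp [distLift]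

lemma distLift_inr_inr_ne (d : X → X → ℝ) {v w : V} (hvw : v ≠ w) :
    distLift (A := A) d (Sum.inr v) (Sum.inr w) = 1 := by
  simp [distLift, hvw]

lemma distLift_inl_inr (d : X → X → ℝ) (a : A) (x : X) (v : V) :
    distLift d (Sum.inl (a, x)) (Sum.inr v) = 1 := by simp [distLift]

lemma distLift_inr_inl (d : X → X → ℝ) (a : A) (x : X) (v : V) :
    distLift d (Sum.inr v) (Sum.inl (a, x)) = 1 := by simp [distLift]

lemma hInf_le {s : Finset Y} {f : Y → ℝ} {m : Y} (hm : m ∈ s) :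
    hInf s f ≤ f m := by
  have h : s.Nonempty := ⟨m, hm⟩
  simp only [hInf, dif_pos h]
  exact Finset.inf'_le f hm

lemma le_hSup {s : Finset Y} {f : Y → ℝ} {m : Y} (hm : m ∈ s) :
    f m ≤ hSup s f := by
  have h : s.Nonempty := ⟨m, hm⟩
  simp only [hSup, dif_pos h]
  exact Finset.le_sup' f hm

lemma hSup_le {s : Finset Y} {f : Y → ℝ} {c : ℝ}
    (hc : 0 ≤ c) (h : ∀ m ∈ s, f m ≤ c) : hSup s f ≤ c := by
  unfold hSup
  split_ifs with hs
  · exact Finset.sup'_le hs f h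
  · exact hc

lemma exists_of_hInf_le {s : Finset Y} {f : Y → ℝ} {c : ℝ}
    (hc : c < 1) (h : hInf s f ≤ c) : ∃ m ∈ s, f m ≤ c := by
  unfold hInf at h
  split_ifs at h with hs
  · obtain ⟨m, hm, hval⟩ := Finset.exists_mem_eq_inf' hs f
    exact ⟨m, hm, by rw [← hval]; exact h⟩
  · linarith

end Aux

/-- For any prechart, `x ~^(k) y` iff `bd_β(x,y) ≤ 2^{-k}`. -/
theorem strat_iff_bd_le_two_pow {A V X : Type*}
    (β : X → Finset ((A × X) ⊕ V)) (bd : X → X → ℝ) (hbd : IsLfpDist β bd)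
    (x y : X) (k : ℕ) :
    Strat β k x y ↔ bd x y ≤ (1 / 2 : ℝ) ^ k := by
  obtain ⟨hmet, hfix, -⟩ := hbd
  induction k generalizing x y with
  | zero =>
    simp only [Strat, Strat2, pow_zero]
    exact iff_of_true trivial (hmet.le_one x y)
  | succ k ih =>
    have hpos : (0 : ℝ) ≤ (1 / 2 : ℝ) ^ (k + 1) := by positivity
    have hlt : ((1 : ℝ) / 2) ^ (k + 1) < 1 := by
      apply pow_lt_one₀ <;> norm_num
    have hpow : ((1 : ℝ) / 2) ^ (k + 1) = (1 / 2) * (1 / 2 : ℝ) ^ k := by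
      rw [pow_succ]; ring
    constructor
    · rintro ⟨hv, h1, h2⟩
      rw [← hfix]
      unfold Phi hausdorffDist
      apply max_le
      · apply hSup_le hpos
        intro m hm
        match m with
        | Sum.inl (a, x') =>
          obtain ⟨y', hy', hs⟩ := h1 a x' hm
          calc hInf (β y) (fun n => distLift bd (Sum.inl (a, x')) n)
              ≤ distLift bd (Sum.inl (a, x')) (Sum.inl (a, y')) := hInf_le hy'
            _ = (1 / 2) * bd x' y' := by rw [distLift_inl_inl_eq]
            _ ≤ (1 / 2) * (1 / 2 : ℝ) ^ k := by
                have := (ih x' y').mp hs; linarith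
            _ = (1 / 2 : ℝ) ^ (k + 1) := hpow.symm
        | Sum.inr v =>
          have hvy : Sum.inr v ∈ β y := (hv v).mp hm
          calc hInf (β y) (fun n => distLift bd (Sum.inr v) n)
              ≤ distLift bd (Sum.inr v) (Sum.inr v) := hInf_le hvy
            _ = 0 := by rw [distLift_inr_inr_eq]
            _ ≤ _ := hpos
      · apply hSup_le hpos
        intro m hm
        match m with
        | Sum.inl (a, y') =>
          obtain ⟨x', hx', hs⟩ := h2 a y' hm
          calc hInf (β x) (fun n => distLift bd (Sum.inl (a, y')) n)
              ≤ distLift bd (Sum.inl (a, y')) (Sum.inl (a, x')) := hInf_le hx'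
            _ = (1 / 2) * bd y' x' := by rw [distLift_inl_inl_eq]
            _ ≤ (1 / 2) * (1 / 2 : ℝ) ^ k := by
                have h' := (ih x' y').mp hs
                rw [hmet.symm y' x']; linarith
            _ = (1 / 2 : ℝ) ^ (k + 1) := hpow.symm
        | Sum.inr v =>
          have hvx : Sum.inr v ∈ β x := (hv v).mpr hm
          calc hInf (β x) (fun n => distLift bd (Sum.inr v) n)
              ≤ distLift bd (Sum.inr v) (Sum.inr v) := hInf_le hvx
            _ = 0 := by rw [distLift_inr_inr_eq]
            _ ≤ _ := hpos
    · intro h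
      rw [← hfix] at h
      unfold Phi hausdorffDist at h
      obtain ⟨ha, hb⟩ := max_le_iff.mp h
      refine ⟨?_, ?_, ?_⟩
      · intro v
        constructor
        · intro hvx
          have h' : hInf (β y) (fun n => distLift bd (Sum.inr v) n)
              ≤ (1 / 2 : ℝ) ^ (k + 1) := le_trans (le_hSup (f := fun m => hInf (β y) fun n => distLift bd m n) hvx) ha
          obtain ⟨m, hm, hfm⟩ := exists_of_hInf_le hlt h'
          match m with
          | Sum.inl (a, x') =>
            rw [distLift_inr_inl] at hfm; linarith
          | Sum.inr w =>
            rcases eq_or_ne v w with rfl | hw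
            · exact hm
            · rw [distLift_inr_inr_ne bd hw] at hfm; linarith
        · intro hvy
          have h' : hInf (β x) (fun n => distLift bd (Sum.inr v) n)
              ≤ (1 / 2 : ℝ) ^ (k + 1) := le_trans (le_hSup (f := fun m => hInf (β x) fun n => distLift bd m n) hvy) hb
          obtain ⟨m, hm, hfm⟩ := exists_of_hInf_le hlt h'
          match m with
          | Sum.inl (a, x') =>
            rw [distLift_inr_inl] at hfm; linarith
          | Sum.inr w =>
            rcases eq_or_ne v w with rfl | hw
            · exact hm
            · rw [distLift_inr_inr_ne bd hw] at hfm; linarith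
      · intro a x' hx'
        have h' : hInf (β y) (fun n => distLift bd (Sum.inl (a, x')) n)
            ≤ (1 / 2 : ℝ) ^ (k + 1) := le_trans (le_hSup (f := fun m => hInf (β y) fun n => distLift bd m n) hx') ha
        obtain ⟨m, hm, hfm⟩ := exists_of_hInf_le hlt h'
        match m with
        | Sum.inl (b, y') =>
          rcases eq_or_ne a b with rfl | hab
          · rw [distLift_inl_inl_eq] at hfm
            refine ⟨y', hm, (ih x' y').mpr ?_⟩
            rw [hpow] at hfm; linarith
          · rw [distLift_inl_inl_ne bd hab] at hfm; linarith
        | Sum.inr v =>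
          rw [distLift_inl_inr] at hfm; linarith
      · intro a y' hy'
        have h' : hInf (β x) (fun n => distLift bd (Sum.inl (a, y')) n)
            ≤ (1 / 2 : ℝ) ^ (k + 1) := le_trans (le_hSup (f := fun m => hInf (β x) fun n => distLift bd m n) hy') hb
        obtain ⟨m, hm, hfm⟩ := exists_of_hInf_le hlt h'
        match m with
        | Sum.inl (b, x') =>
          rcases eq_or_ne a b with rfl | hab
          · rw [distLift_inl_inl_eq] at hfm
            refine ⟨x', hm, (ih x' y').mpr ?_⟩
            rw [hmet.symm x' y', hpow] at *; linarith
          · rw [distLift_inl_inl_ne bd hab] at hfm; linarith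
        | Sum.inr v =>
          rw [distLift_inl_inr] at hfm; linarith
end
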